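/- arXiv:0906.3891 — 2 statements merged into one kernel-verified Lean document; each statement's English description precedes it below -/
import Mathlib

section
/- For a prime p > 3, define φ(X) = ((X+1)^p − X^p − 1)/p ∈ Z[X]. Then over the field F_p, the reduction of φ(X, −1) := ((X−1)^p − X^p + 1)/p factors as −X(X−1)·∏_{α ∈ F_p, α ≠ 0,1}(X−α)² · ∏_{β}(X−β), where the β run over the roots not lying in F_p, each occurring with multiplicity 1. -/
open Polynomial

/-! Let `f` be the reduction of `φ(X,−1)` modulo `p`. Over `ℤ`, `p φ' = p ((X−1)^(p−1) − X^(p−1))`,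
so in characteristic `p` the Frobenius identity `(X−1)^p = X^p − 1` gives `X (X−1) f' = X^p − X`.
Hence `f'` vanishes exactly on `𝔽_p ∖ {0, 1}`, and differentiating once more,
`(2X−1) f' + X (X−1) f'' = −1`, so `f'` and `f''` have no common zero and `f'(0), f'(1) ≠ 0`.
Every root of `f` therefore has multiplicity `1` or `2`, the double roots are exactly the
roots in `𝔽_p ∖ {0, 1}`, and `0, 1` are simple roots. The leading coefficient `−1` is read off
over `ℤ`. -/

theorem coeff_X_sub_one_pow_sub_X_pow_add_one (p k : ℕ) :
    ((X - 1 : ℤ[X]) ^ p - X ^ p + 1).coeff k =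
      (-1 : ℤ) ^ (p - k) * p.choose k - (if k = p then 1 else 0) + (if k = 0 then 1 else 0) := by
  rw [sub_eq_add_neg X 1, ← C_1, ← C_neg]
  simp only [coeff_add, coeff_sub, coeff_X_add_C_pow, coeff_X_pow, C_1, coeff_one]

section

variable {p : ℕ} {φ : ℤ[X]}

theorem derivative_eq_of_C_mul_eq (hp : p ≠ 0) (hφ : C (p : ℤ) * φ = (X - 1) ^ p - X ^ p + 1) :
    derivative φ = (X - 1) ^ (p - 1) - X ^ (p - 1) := by
  have hC : C (p : ℤ) ≠ 0 := by simpa using hp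
  apply mul_left_cancel₀ hC
  have h := congrArg derivative hφ
  simp only [derivative_C_mul, derivative_add, derivative_sub, derivative_pow, derivative_X,
    derivative_one] at h
  rw [h]
  ring

theorem isRoot_zero_of_C_mul_eq (hp : Odd p) (hφ : C (p : ℤ) * φ = (X - 1) ^ p - X ^ p + 1) :
    φ.IsRoot 0 := by
  have h := congrArg (eval 0) hφ
  simpa [hp.neg_one_pow, zero_pow hp.pos.ne', hp.pos.ne'] using h

theorem isRoot_one_of_C_mul_eq (hp : p ≠ 0) (hφ : C (p : ℤ) * φ = (X - 1) ^ p - X ^ p + 1) :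
    φ.IsRoot 1 := by
  have h := congrArg (eval 1) hφ
  simpa [zero_pow hp, hp] using h

theorem leadingCoeff_eq_neg_one_of_C_mul_eq (hp : 2 ≤ p)
    (hφ : C (p : ℤ) * φ = (X - 1) ^ p - X ^ p + 1) : φ.leadingCoeff = -1 := by
  have hcoeff : ∀ k, (p : ℤ) * φ.coeff k =
      (-1 : ℤ) ^ (p - k) * p.choose k - (if k = p then 1 else 0) + (if k = 0 then 1 else 0) := by
    intro k
    rw [← coeff_C_mul, hφ, coeff_X_sub_one_pow_sub_X_pow_add_one]
  have hp0 : (p : ℤ) ≠ 0 := by positivity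
  have htop : φ.coeff (p - 1) = -1 := by
    apply mul_left_cancel₀ hp0
    rw [hcoeff, Nat.sub_sub_self (by omega), Nat.choose_symm (by omega), Nat.choose_one_right]
    simp [show p - 1 ≠ p by omega, show p - 1 ≠ 0 by omega]
  have hdeg : φ.natDegree ≤ p - 1 := by
    refine natDegree_le_iff_coeff_eq_zero.mpr fun k hk => mul_left_cancel₀ hp0 ?_
    rw [hcoeff, mul_zero]
    rcases (show p ≤ k by omega).eq_or_lt with rfl | hk
    · simp [show p ≠ 0 by omega]
    · simp [Nat.choose_eq_zero_of_lt hk, hk.ne', show k ≠ 0 by omega]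
  rw [leadingCoeff, natDegree_eq_of_le_of_coeff_ne_zero hdeg (by simp [htop]), htop]

end

theorem X_mul_X_sub_one_mul_X_sub_one_pow_sub_X_pow {R : Type*} [CommRing R] (p : ℕ)
    [Fact p.Prime] [CharP R p] :
    X * (X - 1) * ((X - 1) ^ (p - 1) - X ^ (p - 1) : R[X]) = X ^ p - X := by
  have hp := (Fact.out : p.Prime).one_le
  calc X * (X - 1) * ((X - 1) ^ (p - 1) - X ^ (p - 1) : R[X])
      = X * (X - 1) ^ (p - 1 + 1) - (X - 1) * X ^ (p - 1 + 1) := by ring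
    _ = X ^ p - X := by rw [Nat.sub_add_cancel hp, sub_pow_char, one_pow]; ring

section

variable {K : Type*} [Field K] {p : ℕ} {g : K[X]}

theorem two_mul_sub_one_mul_eval_add_mul_eval_derivative [CharP K p]
    (hg : X * (X - 1) * g = X ^ p - X) (b : K) :
    (2 * b - 1) * g.eval b + b * (b - 1) * (derivative g).eval b = -1 := by
  have h := congrArg (fun q => (derivative q).eval b) hg
  simp only [derivative_mul, derivative_sub, derivative_X, derivative_one, derivative_X_pow,
    CharP.cast_eq_zero, C_0, zero_mul, eval_add, eval_sub, eval_mul, eval_X, eval_one,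
    eval_zero] at h
  linear_combination h

theorem not_isRoot_of_mul_sub_one_eq_zero [CharP K p] (hg : X * (X - 1) * g = X ^ p - X) {b : K}
    (hb : b * (b - 1) = 0) : ¬ g.IsRoot b := by
  intro hroot
  have h := two_mul_sub_one_mul_eval_add_mul_eval_derivative hg b
  rw [hroot.eq_zero, hb] at h
  simp at h

theorem not_isRoot_derivative_of_isRoot [CharP K p] (hg : X * (X - 1) * g = X ^ p - X) {b : K}
    (hb : g.IsRoot b) : ¬ (derivative g).IsRoot b := by
  intro hroot
  have h := two_mul_sub_one_mul_eval_add_mul_eval_derivative hg b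
  rw [hroot.eq_zero, hb.eq_zero] at h
  simp at h

theorem isRoot_iff_pow_eq_self (hg : X * (X - 1) * g = X ^ p - X) {b : K} (h0 : b ≠ 0)
    (h1 : b ≠ 1) : g.IsRoot b ↔ b ^ p = b := by
  have h := congrArg (eval b) hg
  simp only [eval_mul, eval_sub, eval_X, eval_one, eval_pow] at h
  rw [IsRoot, ← sub_eq_zero (a := b ^ p), ← h, mul_eq_zero, or_iff_right]
  exact mul_ne_zero h0 (sub_ne_zero.mpr h1)

end

theorem roots_eq_two_nsmul_add {R : Type*} [CommRing R] [IsDomain R] [DecidableEq R] {f : R[X]}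
    (hf : f ≠ 0)
    (h : ∀ t, f.IsRoot t → (derivative f).IsRoot t → ¬ (derivative (derivative f)).IsRoot t) :
    f.roots = 2 • (f.roots.toFinset.filter (derivative f).IsRoot).val +
      (f.roots.toFinset.filter fun t => ¬ (derivative f).IsRoot t).val := by
  ext t
  rw [count_roots, Multiset.count_add, Multiset.count_nsmul,
    Multiset.count_eq_of_nodup (Finset.nodup _), Multiset.count_eq_of_nodup (Finset.nodup _)]
  simp only [Finset.mem_val, Finset.mem_filter, Multiset.mem_toFinset, mem_roots hf]
  by_cases hroot : f.IsRoot t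
  · have hlt := one_lt_rootMultiplicity_iff_isRoot hf (t := t)
    by_cases hroot' : (derivative f).IsRoot t
    · have hle : f.rootMultiplicity t ≤ 2 := by
        by_contra! hgt
        exact h t hroot hroot' (isRoot_iterate_derivative_of_lt_rootMultiplicity (n := 2) hgt)
      have hgt := hlt.mpr ⟨hroot, hroot'⟩
      rw [if_pos ⟨hroot, hroot'⟩, if_neg (by tauto)]
      omega
    · have hpos := (rootMultiplicity_pos hf).mpr hroot
      have hle := mt hlt.mp (by tauto)
      rw [if_neg (by tauto), if_pos ⟨hroot, hroot'⟩]
      omega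
  · rw [rootMultiplicity_eq_zero hroot, if_neg (by tauto), if_neg (by tauto)]

theorem exists_eq_neg_X_mul_X_sub_one_mul_prod {K : Type*} [Field K] {p : ℕ} [CharP K p]
    {f : K[X]} (hsplit : f.Splits) (hlead : f.leadingCoeff = -1)
    (h0 : f.IsRoot 0) (h1 : f.IsRoot 1) (hf' : X * (X - 1) * derivative f = X ^ p - X) :
    ∃ A B : Finset K, (∀ a ∈ A, a ^ p = a ∧ a ≠ 0 ∧ a ≠ 1) ∧ (∀ b ∈ B, b ^ p ≠ b) ∧
      f = -(X * (X - 1) * (∏ a ∈ A, (X - C a) ^ 2) * ∏ b ∈ B, (X - C b)) := by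
  classical
  have hf : f ≠ 0 := by rintro rfl; simp at hlead
  have h0' := not_isRoot_of_mul_sub_one_eq_zero hf' (b := 0) (by simp)
  have h1' := not_isRoot_of_mul_sub_one_eq_zero hf' (b := 1) (by simp)
  set A := f.roots.toFinset.filter (derivative f).IsRoot
  set N := f.roots.toFinset.filter fun t => ¬ (derivative f).IsRoot t
  have hN : ∀ t, f.IsRoot t → ¬ (derivative f).IsRoot t → t ∈ N := fun t ht ht' =>
    Finset.mem_filter.mpr ⟨Multiset.mem_toFinset.mpr ((mem_roots hf).mpr ht), ht'⟩
  have h0N : 0 ∈ N := hN 0 h0 h0'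
  have h1N : 1 ∈ N.erase 0 := Finset.mem_erase.mpr ⟨one_ne_zero, hN 1 h1 h1'⟩
  refine ⟨A, (N.erase 0).erase 1, fun a ha => ?_, fun b hb => ?_, ?_⟩
  · have hfa : (derivative f).IsRoot a := (Finset.mem_filter.mp ha).2
    have ha0 : a ≠ 0 := by rintro rfl; exact h0' hfa
    have ha1 : a ≠ 1 := by rintro rfl; exact h1' hfa
    exact ⟨(isRoot_iff_pow_eq_self hf' ha0 ha1).mp hfa, ha0, ha1⟩
  · simp only [Finset.mem_erase, N, Finset.mem_filter] at hb
    exact (isRoot_iff_pow_eq_self hf' hb.2.1 hb.1).not.mp hb.2.2.2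
  · have hprodN :
        ∏ b ∈ N, (X - C b) = X * (X - 1) * ∏ b ∈ (N.erase 0).erase 1, (X - C b) := by
      rw [← Finset.mul_prod_erase N _ h0N, ← Finset.mul_prod_erase _ _ h1N]
      simp only [C_0, sub_zero, C_1, mul_assoc]
    have hroots := roots_eq_two_nsmul_add hf fun t _ => not_isRoot_derivative_of_isRoot hf'
    calc f = C f.leadingCoeff * (f.roots.map (X - C ·)).prod := hsplit.eq_prod_roots
      _ = -((∏ a ∈ A, (X - C a)) ^ 2 * ∏ b ∈ N, (X - C b)) := by
        rw [hlead, hroots, Multiset.map_add, Multiset.map_nsmul, Multiset.prod_add,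
          Multiset.prod_nsmul, map_neg, C_1, neg_one_mul]
        rfl
      _ = _ := by rw [hprodN, Finset.prod_pow]; ring

theorem mem_range_algebraMap_zmod_iff_pow_eq_self {p : ℕ} [Fact p.Prime] {K : Type*} [Field K]
    [Algebra (ZMod p) K] {x : K} :
    x ∈ Set.range (algebraMap (ZMod p) K) ↔ x ^ p = x := by
  have : CharP K p := (Algebra.charP_iff (ZMod p) K p).mp inferInstance
  rw [← Subfield.mem_bot_iff_pow_eq_self K p, ← ZMod.fieldRange_castHom_eq_bot p,
    RingHom.mem_fieldRange, Subsingleton.elim (algebraMap (ZMod p) K) (ZMod.castHom dvd_rfl K)]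
  rfl

theorem Finset.exists_fin_injective_prod_eq {ι M : Type*} [CommMonoid M] (s : Finset ι) :
    ∃ (n : ℕ) (v : Fin n → ι), Function.Injective v ∧ (∀ i, v i ∈ s) ∧
      ∀ h : ι → M, ∏ i, h (v i) = ∏ x ∈ s, h x :=
  ⟨s.card, fun i => s.equivFin.symm i, Subtype.val_injective.comp s.equivFin.symm.injective,
    fun i => (s.equivFin.symm i).2,
    fun h => (Equiv.prod_comp s.equivFin.symm (fun x : s => h x)).trans (s.prod_coe_sort h)⟩

/-- For a prime `p > 3` and `φ(X,−1) = ((X−1)^p − X^p + 1)/p ∈ ℤ[X]`, the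
reduction of `φ(X,−1)` mod `p` factors over an algebraic closure of `F_p` as
`−X(X−1)·∏_i (X−α_i)² · ∏_j (X−β_j)` where the `α_i` are the distinct roots
lying in `F_p \ {0,1}` (each with multiplicity `2`) and the `β_j` are the
distinct roots not lying in `F_p` (each with multiplicity `1`). -/
theorem phi_factorization (p : ℕ) [hp : Fact p.Prime] (h3 : 3 < p)
    (φ : Polynomial ℤ)
    (hφ : (C (p : ℤ)) * φ = (X - 1) ^ p - X ^ p + 1) :
    ∃ (r s : ℕ) (α : Fin r → AlgebraicClosure (ZMod p))
      (β : Fin s → AlgebraicClosure (ZMod p)),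
      Function.Injective α ∧ Function.Injective β ∧
      (∀ i, α i ∈ Set.range (algebraMap (ZMod p) (AlgebraicClosure (ZMod p))) ∧
        α i ≠ 0 ∧ α i ≠ 1) ∧
      (∀ j, β j ∉ Set.range (algebraMap (ZMod p) (AlgebraicClosure (ZMod p)))) ∧
      φ.map (Int.castRingHom (AlgebraicClosure (ZMod p))) =
        -(X * (X - 1) * (∏ i, (X - C (α i)) ^ 2) * ∏ j, (X - C (β j))) := by
  set K := AlgebraicClosure (ZMod p)
  set f := φ.map (Int.castRingHom K)
  have hodd : Odd p := hp.out.odd_of_ne_two (by omega)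
  have hlead : f.leadingCoeff = -1 := by
    have h := leadingCoeff_eq_neg_one_of_C_mul_eq hp.out.two_le hφ
    rw [leadingCoeff_map_of_leadingCoeff_ne_zero _ (by simp [h]), h, map_neg, map_one]
  have hderiv : derivative f = (X - 1) ^ (p - 1) - X ^ (p - 1) := by
    simp [f, derivative_map, derivative_eq_of_C_mul_eq hp.out.ne_zero hφ]
  have hroot (t : ℤ) (ht : φ.IsRoot t) : f.IsRoot t := ht.map
  obtain ⟨A, B, hA, hB, hf⟩ := exists_eq_neg_X_mul_X_sub_one_mul_prod (IsAlgClosed.splits f)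
    hlead (by simpa using hroot 0 (isRoot_zero_of_C_mul_eq hodd hφ))
    (by simpa using hroot 1 (isRoot_one_of_C_mul_eq hp.out.ne_zero hφ))
    (hderiv ▸ X_mul_X_sub_one_mul_X_sub_one_pow_sub_X_pow p)
  obtain ⟨r, α, hα, hαA, hprodA⟩ := A.exists_fin_injective_prod_eq (M := K[X])
  obtain ⟨s, β, hβ, hβB, hprodB⟩ := B.exists_fin_injective_prod_eq (M := K[X])
  refine ⟨r, s, α, β, hα, hβ, fun i => ?_, fun j => ?_, ?_⟩
  · obtain ⟨hpow, h0, h1⟩ := hA _ (hαA i)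
    exact ⟨mem_range_algebraMap_zmod_iff_pow_eq_self.mpr hpow, h0, h1⟩
  · exact mem_range_algebraMap_zmod_iff_pow_eq_self.not.mpr (hB _ (hβB j))
  · rw [hprodA fun a => (X - C a) ^ 2, hprodB fun b => X - C b]
    exact hf
end

section
/- Let p > 3 be prime, g = (p−1)(p−2)/2, and S a cusp of the Fermat curve F_p defined over Q(ζ_p). Assuming cuspidal divisors on F_p are torsion (Rohrlich) and that by the Riemann–Hurwitz formula applied to the Belyi map β there is a canonical divisor supported on the cusps, the divisor (2g−2)·S is a canonical divisor of F_p in Cl(F_p) ⊗ ℚ. -/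
/-- In `Cl(F_p) ⊗ ℚ`: if every degree-zero divisor supported on the cusps is
torsion (Rohrlich) and `K` is a canonical divisor class supported on the cusps
(which exists by Riemann–Hurwitz for the Belyi map) with `deg K = 2g − 2`,
where each cusp has degree `1` and `g = (p−1)(p−2)/2`, then `(2g−2)·S` is a
canonical divisor for any cusp `S`. -/
theorem canonical_divisor_is_cusp_multiple (p : ℕ) (hp : p.Prime) (h3 : 3 < p)
    (V : Type*) [AddCommGroup V] [Module ℚ V]   -- V = Cl(F_p) ⊗ ℚ
    (deg : V →ₗ[ℚ] ℚ)
    (ι : Type*) [Fintype ι] (c : ι → V)          -- classes of the cusps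
    (hdeg : ∀ i, deg (c i) = 1)
    (htor : ∀ a : ι → ℚ, (∑ i, a i) = 0 → (∑ i, a i • c i) = 0)
    (g : ℚ) (hg : g = ((p : ℚ) - 1) * ((p : ℚ) - 2) / 2)
    (K : V) (a : ι → ℚ) (hK : K = ∑ i, a i • c i)
    (hKdeg : deg K = 2 * g - 2) :
    ∀ j, K = (2 * g - 2) • c j := by
  classical
  intro j
  have hsum : (∑ i, a i) = 2 * g - 2 := by
    have : deg K = ∑ i, a i := by
      rw [hK, map_sum]
      simp [hdeg]
    linarith [this, hKdeg]
  set b : ι → ℚ := fun i => a i - (if i = j then 2 * g - 2 else 0) with hb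
  have hbsum : (∑ i, b i) = 0 := by
    simp [hb, Finset.sum_sub_distrib, hsum]
  have h0 := htor b hbsum
  have key : (∑ i, b i • c i) = K - (2 * g - 2) • c j := by
    have h1 : (∑ i, b i • c i)
        = ∑ i, (a i • c i - (if i = j then 2 * g - 2 else 0) • c i) := by
      refine Finset.sum_congr rfl fun i _ => ?_
      rw [hb]; rw [sub_smul]
    rw [h1, Finset.sum_sub_distrib, ← hK]
    congr 1
    simp
  rw [key] at h0
  exact sub_eq_zero.mp h0
end
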